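/- arXiv:0808.3210 — 5 statements merged into one kernel-verified Lean document; each statement's English description precedes it below -/
import Mathlib

section
/- Let A be an abelian category in which every object has finite length, and suppose S⁺ and S⁻ are two sets of isomorphism classes of simple objects of A such that every simple object lies in exactly one of S⁺, S⁻, and such that Ext¹(G, G') = 0 for every simple G whose class is in S⁻ and every simple G' whose class is in S⁺. Then every object F of A admits a unique subobject F' all of whose composition factors lie in S⁻ such that all composition factors of F/F' lie in S⁺; moreover the assignment F ↦ F' is functorial. -/
open CategoryTheory Limits

universe v u

variable {A : Type u} [Category.{v} A] [Abelian A]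

/-- `S` is a simple subquotient (equivalently, in a finite-length abelian category,
a composition factor) of `F`: there is an object `Z` with a mono `Z ⟶ F` and an
epi `Z ⟶ S`, and `S` is simple. -/
def IsCompositionFactor (S F : A) : Prop :=
  Simple S ∧ ∃ (Z : A) (i : Z ⟶ F) (p : Z ⟶ S), Mono i ∧ Epi p

/-!
Take for `F'` a maximal subobject of `F` all of whose composition factors lie in `Sm`. If `F/F'`
had a composition factor in `Sm`, choose a minimal subobject `W` of `F/F'` with an epimorphism
`p : W ⟶ S` onto a member of `Sm`. If `p` is not an isomorphism, `ker p` has a simple quotient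
`ker p / M`: if it lies in `Sm`, then `ker p` contradicts minimality; if it lies in `Sp`, the
extension `0 ⟶ ker p / M ⟶ W / M ⟶ S ⟶ 0` splits and the preimage in `W` of the section
contradicts minimality. Hence `W ≅ S`, and the preimage of `W` in `F` contradicts the
maximality of `F'`. Uniqueness and functoriality hold because a morphism from an object with
all composition factors in `Sm` to one with all composition factors in `Sp` is zero: a simple
subobject of its image would be a composition factor of both.
-/

open Opposite

namespace IsCompositionFactor

variable {S X Y : A}

lemma of_mono (h : IsCompositionFactor S Y) (i : Y ⟶ X) [Mono i] : IsCompositionFactor S X := by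
  obtain ⟨hS, Z, j, p, _, _⟩ := h
  exact ⟨hS, Z, j ≫ i, p, mono_comp _ _, ‹_›⟩

lemma of_epi (h : IsCompositionFactor S Y) (q : X ⟶ Y) [Epi q] : IsCompositionFactor S X := by
  obtain ⟨hS, Z, j, p, _, _⟩ := h
  have := Abelian.epi_pullback_of_epi_g j q
  exact ⟨hS, pullback j q, pullback.snd j q, pullback.fst j q ≫ p, inferInstance,
    epi_comp _ _⟩

lemma not_of_isZero (hX : IsZero X) : ¬ IsCompositionFactor S X := by
  rintro ⟨hS, Z, i, p, _, _⟩
  exact Simple.not_isZero S (IsZero.of_epi p (IsZero.of_mono i hX))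

lemma self [h : Simple S] : IsCompositionFactor S S :=
  ⟨h, S, 𝟙 S, 𝟙 S, inferInstance, inferInstance⟩

lemma nonempty_iso [Simple X] (h : IsCompositionFactor S X) : Nonempty (S ≅ X) := by
  obtain ⟨hS, Z, i, p, _, _⟩ := h
  have hZ : ¬ IsZero Z := fun hZ => Simple.not_isZero S (IsZero.of_epi p hZ)
  have : IsIso i := isIso_of_mono_of_nonzero fun h0 => hZ (IsZero.of_mono_eq_zero i h0)
  have : Simple Z := Simple.of_iso (asIso i)
  have : IsIso p :=
    isIso_of_epi_of_nonzero fun h0 => Simple.not_isZero S (IsZero.of_epi_eq_zero p h0)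
  exact ⟨(asIso p).symm ≪≫ asIso i⟩

lemma kernel_or_target (h : IsCompositionFactor S X) (g : X ⟶ Y) :
    IsCompositionFactor S (kernel g) ∨ IsCompositionFactor S Y := by
  obtain ⟨hS, Z, i, p, _, _⟩ := h
  by_cases hp : kernel.ι (i ≫ g) ≫ p = 0
  · right
    refine ⟨hS, cokernel (kernel.ι (i ≫ g)), Abelian.factorThruCoimage (i ≫ g),
      cokernel.desc _ p hp, inferInstance, epi_of_epi_fac (cokernel.π_desc _ _ _)⟩
  · left
    have hcomp : kernel.lift g (kernel.ι (i ≫ g) ≫ i) (by simp) ≫ kernel.ι g =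
        kernel.ι (i ≫ g) ≫ i := kernel.lift_ι _ _ _
    have : Mono (kernel.ι (i ≫ g) ≫ i) := mono_comp _ _
    exact ⟨hS, _, _, _, mono_of_mono_fac hcomp, epi_of_nonzero_to_simple hp⟩

end IsCompositionFactor

def CompositionFactorsIn (P : Set A) (X : A) : Prop :=
  ∀ S : A, IsCompositionFactor S X → S ∈ P

lemma Subobject.factors_of_comp_cokernel_π_eq_zero {X Y : A} (P : Subobject X) (f : Y ⟶ X)
    (h : f ≫ cokernel.π P.arrow = 0) : P.Factors f :=
  (Subobject.factors_iff P f).2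
    ⟨Abelian.monoLift P.arrow f h, Abelian.monoLift_comp P.arrow f h⟩

lemma eq_zero_of_compositionFactorsIn {P R : Set A} (hPR : Disjoint P R) {X Y : A}
    [IsArtinianObject Y] (f : X ⟶ Y) (hX : CompositionFactorsIn P X)
    (hY : CompositionFactorsIn R Y) : f = 0 := by
  by_contra hf
  have hI : ¬ IsZero (Abelian.image f) := fun h => hf <| by
    rw [← Abelian.image.fac f, h.eq_zero_of_tgt (Abelian.factorThruImage f), zero_comp]
  have := isArtinianObject_of_mono (Abelian.image.ι f)
  obtain ⟨S, hS⟩ := exists_simple_subobject hI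
  have hSI : IsCompositionFactor (S : A) (Abelian.image f) :=
    IsCompositionFactor.self.of_mono S.arrow
  exact Set.disjoint_left.1 hPR (hX _ (hSI.of_epi (Abelian.factorThruImage f)))
    (hY _ (hSI.of_mono (Abelian.image.ι f)))

lemma isArtinianObject_op (X : A) [IsNoetherianObject X] : IsArtinianObject (op X) :=
  ⟨(Abelian.subobjectIsoSubobjectOp X).dual.symm.toOrderEmbedding.wellFoundedLT⟩

lemma simple_unop (Y : Aᵒᵖ) [Simple Y] : Simple Y.unop := by
  refine simple_of_cosimple _ fun f _ => ?_
  rw [← isIso_op_iff, Simple.mono_isIso_iff_nonzero, Ne, Ne, ← op_zero,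
    Quiver.Hom.op_inj.eq_iff]

lemma exists_simple_cokernel {X : A} [IsNoetherianObject X] (hX : ¬ IsZero X) :
    ∃ (M : A) (m : M ⟶ X), Mono m ∧ Simple (cokernel m) := by
  have := isArtinianObject_op X
  obtain ⟨Y, hY⟩ := exists_simple_subobject (X := op X) fun h => hX h.unop
  have := simple_unop (Y : Aᵒᵖ)
  exact ⟨_, kernel.ι Y.arrow.unop, inferInstance,
    Simple.of_iso (asIso (Abelian.factorThruCoimage Y.arrow.unop))⟩

lemma shortExact_cokernel_map_comp {M K W : A} (m : M ⟶ K) (i : K ⟶ W) [Mono i] :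
    (ShortComplex.mk (cokernel.map m (m ≫ i) (𝟙 _) i (by simp))
      (cokernel.map (m ≫ i) i m (𝟙 _) (by simp)) (by ext; simp)).ShortExact := by
  have hexact := kernelCokernelCompSequence_exact m i
  have hδ : kernelCokernelCompSequence.δ m i = 0 := by
    simp [kernelCokernelCompSequence.δ_fac, kernel.ι_of_mono]
  refine .mk' (hexact.exact 3) ?_ ?_
  · exact (hexact.exact 2).mono_g hδ
  · dsimp
    infer_instance

def HasQuotientIn (P : Set A) (X : A) : Prop :=
  ∃ S ∈ P, ∃ q : X ⟶ S, Epi q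

def ExtOneVanishes (Sm Sp : Set A) : Prop :=
  ∀ S : ShortComplex A, S.ShortExact → S.X₁ ∈ Sp → S.X₃ ∈ Sm →
    ∃ r : S.X₂ ⟶ S.X₁, S.f ≫ r = 𝟙 S.X₁

lemma exists_mono_not_isIso_hasQuotientIn_of_cokernel_mem {Sp Sm : Set A}
    (hext : ExtOneVanishes Sm Sp) {M K W : A} (m : M ⟶ K) (i : K ⟶ W) [Mono i]
    (hm : ¬ IsZero (cokernel m)) (hmSp : cokernel m ∈ Sp) (hiSm : cokernel i ∈ Sm) :
    ∃ (W₂ : A) (j : W₂ ⟶ W), Mono j ∧ ¬ IsIso j ∧ HasQuotientIn Sm W₂ := by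
  -- The section of `cokernel (m ≫ i) ⟶ cokernel i` pulls back to a subobject of `W` that still
  -- maps onto `cokernel i`; it is proper because the retraction `r` vanishes on it.
  have hE := shortExact_cokernel_map_comp m i
  obtain ⟨r, hr⟩ := hext _ hE hmSp hiSm
  let σ := ShortComplex.Splitting.ofExactOfRetraction _ hE.exact r hr hE.epi_g
  have : Mono σ.s := mono_of_mono_fac σ.s_g
  have := Abelian.epi_pullback_of_epi_g σ.s (cokernel.π (m ≫ i))
  refine ⟨pullback σ.s (cokernel.π (m ≫ i)), pullback.snd _ _, inferInstance, fun _ => hm ?_,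
    _, hiSm, pullback.fst _ _, inferInstance⟩
  have hπr : cokernel.π (m ≫ i) ≫ r = 0 := by
    rw [← cancel_epi (pullback.snd σ.s (cokernel.π (m ≫ i)))]
    simp only [comp_zero, ← pullback.condition_assoc]
    exact (pullback.fst σ.s (cokernel.π (m ≫ i)) ≫= σ.s_r).trans comp_zero
  have hr0 : r = 0 := (cancel_epi (cokernel.π (m ≫ i))).1 (by simpa using hπr)
  rw [IsZero.iff_id_eq_zero, ← hr, hr0, comp_zero]

lemma exists_mono_not_isIso_hasQuotientIn {Sp Sm : Set A}
    (hSm_iso : ∀ {X Y : A}, (X ≅ Y) → X ∈ Sm → Y ∈ Sm)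
    (hcover : ∀ X : A, Simple X → X ∈ Sp ∨ X ∈ Sm) (hext : ExtOneVanishes Sm Sp)
    {W S : A} (p : W ⟶ S) [Epi p] [Simple S] (hS : S ∈ Sm) [IsNoetherianObject (kernel p)]
    (hp : ¬ Mono p) :
    ∃ (W₂ : A) (j : W₂ ⟶ W), Mono j ∧ ¬ IsIso j ∧ HasQuotientIn Sm W₂ := by
  have hK : ¬ IsZero (kernel p) := fun h =>
    hp (Abelian.mono_of_kernel_ι_eq_zero p (h.eq_zero_of_src _))
  obtain ⟨M, m, _, hT⟩ := exists_simple_cokernel hK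
  rcases hcover _ hT with hTSp | hTSm
  · exact exists_mono_not_isIso_hasQuotientIn_of_cokernel_mem hext m (kernel.ι p)
      (Simple.not_isZero _) hTSp (hSm_iso (asIso (Abelian.factorThruCoimage p)).symm hS)
  · refine ⟨kernel p, kernel.ι p, inferInstance, fun _ => Simple.not_isZero S ?_,
      _, hTSm, cokernel.π m, inferInstance⟩
    exact IsZero.of_epi_eq_zero p
      (by rw [← cancel_epi (kernel.ι p), kernel.condition, comp_zero])

lemma exists_mono_from_mem_of_hasQuotientIn {Sp Sm : Set A} [∀ X : A, IsNoetherianObject X]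
    (hSm_iso : ∀ {X Y : A}, (X ≅ Y) → X ∈ Sm → Y ∈ Sm)
    (hSm_simple : ∀ X ∈ Sm, Simple X) (hcover : ∀ X : A, Simple X → X ∈ Sp ∨ X ∈ Sm)
    (hext : ExtOneVanishes Sm Sp) {Q : A} [IsArtinianObject Q] (Y : Subobject Q)
    (hY : HasQuotientIn Sm (Y : A)) :
    ∃ T ∈ Sm, ∃ t : T ⟶ Q, Mono t := by
  induction Y using WellFoundedLT.induction with
  | _ Y ih =>
  obtain ⟨S, hS, p, _⟩ := hY
  have := hSm_simple S hS
  by_cases hp : Mono p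
  · have : IsIso p := isIso_of_mono_of_epi p
    exact ⟨S, hS, inv p ≫ Y.arrow, inferInstance⟩
  · obtain ⟨W₂, j, _, hj, S₂, hS₂, q, _⟩ :=
      exists_mono_not_isIso_hasQuotientIn hSm_iso hcover hext p hS hp
    refine ih _ ?_
      ⟨S₂, hS₂, (Subobject.underlyingIso (j ≫ Y.arrow)).hom ≫ q, epi_comp _ _⟩
    simpa using Subobject.mk_lt_mk_of_comm (i₂ := Y.arrow) j rfl hj

lemma exists_gt_compositionFactorsIn {Sm : Set A}
    (hSm_iso : ∀ {X Y : A}, (X ≅ Y) → X ∈ Sm → Y ∈ Sm) {F : A} (F' : Subobject F)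
    (hF' : CompositionFactorsIn Sm F') {T : A} [Simple T] (hT : T ∈ Sm)
    (t : T ⟶ cokernel F'.arrow) [Mono t] :
    ∃ F₂ : Subobject F, F' < F₂ ∧ CompositionFactorsIn Sm F₂ := by
  let π := cokernel.π F'.arrow
  have := Abelian.epi_pullback_of_epi_g t π
  refine ⟨Subobject.mk (pullback.snd t π), lt_of_le_of_ne ?_ fun h => ?_, fun S hS => ?_⟩
  · exact Subobject.le_mk_of_comm (pullback.lift 0 F'.arrow (by simp [π]))
      (pullback.lift_snd _ _ _)
  · have hf := Subobject.factors_of_le (pullback.snd t π) h.ge (Subobject.mk_factors_self _)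
    have : pullback.fst t π ≫ t = 0 := by
      rw [pullback.condition, ← Subobject.factorThru_arrow _ _ hf, Category.assoc,
        cokernel.condition, comp_zero]
    exact Simple.not_isZero T (IsZero.of_epi_eq_zero _ (zero_of_comp_mono t this))
  · rcases (hS.of_mono (Subobject.underlyingIso _).hom).kernel_or_target
      (pullback.fst t π) with hK | hT'
    · have h0 : (kernel.ι (pullback.fst t π) ≫ pullback.snd t π) ≫ π = 0 := by
        simp [← pullback.condition]
      have := mono_comp (kernel.ι (pullback.fst t π)) (pullback.snd t π)
      have := mono_of_mono_fac (Abelian.monoLift_comp F'.arrow _ h0)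
      exact hF' S (hK.of_mono (Abelian.monoLift F'.arrow _ h0))
    · exact hSm_iso hT'.nonempty_iso.some.symm hT

lemma compositionFactorsIn_cokernel_of_maximal {Sp Sm : Set A} [∀ X : A, IsNoetherianObject X]
    [∀ X : A, IsArtinianObject X] (hSm_iso : ∀ {X Y : A}, (X ≅ Y) → X ∈ Sm → Y ∈ Sm)
    (hSm_simple : ∀ X ∈ Sm, Simple X) (hcover : ∀ X : A, Simple X → X ∈ Sp ∨ X ∈ Sm)
    (hext : ExtOneVanishes Sm Sp) {F : A} (F' : Subobject F) (hF' : CompositionFactorsIn Sm F')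
    (hmax : ∀ F₂ : Subobject F, CompositionFactorsIn Sm F₂ → ¬ F' < F₂) :
    CompositionFactorsIn Sp (cokernel F'.arrow) := by
  intro S hS
  refine (hcover S hS.1).resolve_right fun hSm => ?_
  obtain ⟨-, Z, i, p, _, _⟩ := hS
  obtain ⟨T, hT, t, _⟩ := exists_mono_from_mem_of_hasQuotientIn hSm_iso hSm_simple hcover hext
    (Subobject.mk i) ⟨S, hSm, (Subobject.underlyingIso i).hom ≫ p, epi_comp _ _⟩
  have := hSm_simple T hT
  obtain ⟨F₂, hlt, hF₂⟩ := exists_gt_compositionFactorsIn hSm_iso F' hF' hT t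
  exact hmax F₂ hF₂ hlt

theorem bbd_filtration_lemma_general
    -- every object of `A` has finite length (noetherian and artinian subobject lattices)
    (hNoeth : ∀ X : A, ∀ f : ℕ → Subobject X, ¬ StrictMono f)
    (hArt : ∀ X : A, ∀ f : ℕ → Subobject X, ¬ StrictAnti f)
    (Sp Sm : Set A)
    (hSm_iso : ∀ {X Y : A}, (X ≅ Y) → X ∈ Sm → Y ∈ Sm)
    (hSm_simple : ∀ X ∈ Sm, Simple X)
    (hpartition : ∀ X : A, Simple X → (X ∈ Sp ∧ X ∉ Sm) ∨ (X ∈ Sm ∧ X ∉ Sp))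
    -- `Ext¹(G, G') = 0` for `G ∈ Sm`, `G' ∈ Sp`: every short exact sequence splits
    (hext : ∀ (S : ShortComplex A), S.ShortExact → S.X₁ ∈ Sp → S.X₃ ∈ Sm →
      ∃ r : S.X₂ ⟶ S.X₁, S.f ≫ r = 𝟙 S.X₁) :
    ∃ σ : ∀ F : A, Subobject F,
      (∀ F : A,
        (∀ S : A, IsCompositionFactor S ((σ F : A)) → S ∈ Sm) ∧
        (∀ S : A, IsCompositionFactor S (cokernel (σ F).arrow) → S ∈ Sp)) ∧
      -- uniqueness
      (∀ (F : A) (F'' : Subobject F),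
        (∀ S : A, IsCompositionFactor S ((F'' : A)) → S ∈ Sm) →
        (∀ S : A, IsCompositionFactor S (cokernel F''.arrow) → S ∈ Sp) →
        F'' = σ F) ∧
      -- functoriality: any morphism `F ⟶ G` carries `σ F` into `σ G`
      (∀ (F G : A) (φ : F ⟶ G), (σ G).Factors ((σ F).arrow ≫ φ)) := by
  have (X : A) : IsNoetherianObject X := (isNoetherianObject_iff_not_strictMono X).2 (hNoeth X)
  have (X : A) : IsArtinianObject X := (isArtinianObject_iff_not_strictAnti X).2 (hArt X)
  have hcover (X : A) (hX : Simple X) : X ∈ Sp ∨ X ∈ Sm :=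
    (hpartition X hX).imp And.left And.left
  have hdisj : Disjoint Sm Sp := Set.disjoint_left.2 fun X hm hp => by
    rcases hpartition X (hSm_simple X hm) with h | h
    exacts [h.2 hm, h.2 hp]
  have hσ (F : A) : ∃ F' : Subobject F, CompositionFactorsIn Sm F' ∧
      ∀ F₂ : Subobject F, CompositionFactorsIn Sm F₂ → ¬ F' < F₂ :=
    wellFounded_gt.has_min _ ⟨⊥, fun _ h => (IsCompositionFactor.not_of_isZero
      (IsZero.of_iso (isZero_zero A) Subobject.botCoeIsoZero) h).elim⟩
  choose σ hσSm hσmax using hσ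
  have hσSp (F : A) : CompositionFactorsIn Sp (cokernel (σ F).arrow) :=
    compositionFactorsIn_cokernel_of_maximal hSm_iso hSm_simple hcover hext _ (hσSm F) (hσmax F)
  refine ⟨σ, fun F => ⟨hσSm F, hσSp F⟩, fun F F'' hSm hSp => le_antisymm ?_ ?_,
    fun F G φ => ?_⟩
  · exact Subobject.le_of_factors (Subobject.factors_of_comp_cokernel_π_eq_zero _ _
      (eq_zero_of_compositionFactorsIn hdisj _ hSm (hσSp F)))
  · exact Subobject.le_of_factors (Subobject.factors_of_comp_cokernel_π_eq_zero _ _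
      (eq_zero_of_compositionFactorsIn hdisj _ (hσSm F) hSp))
  · refine Subobject.factors_of_comp_cokernel_π_eq_zero _ _ ?_
    rw [Category.assoc]
    exact eq_zero_of_compositionFactorsIn hdisj _ (hσSm F) (hσSp G)

/-- BBD, Lemme 5.3.6: Let `A` be a finite-length abelian category, and let
`Sp`, `Sm` be two iso-closed classes of simple objects such that every simple object lies in
exactly one of them, and such that `Ext¹(G, G') = 0` (every short exact sequence
`0 → G' → E → G → 0` splits) whenever `G` is simple in `Sm` and `G'` is simple in `Sp`.
Then every object `F` admits a unique subobject `F'` all of whose composition factors lie in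
`Sm` and such that all composition factors of `F/F'` lie in `Sp`; moreover the assignment
`F ↦ F'` is functorial. -/
theorem bbd_filtration_lemma
    -- every object of `A` has finite length (noetherian and artinian subobject lattices)
    (hNoeth : ∀ X : A, ∀ f : ℕ → Subobject X, ¬ StrictMono f)
    (hArt : ∀ X : A, ∀ f : ℕ → Subobject X, ¬ StrictAnti f)
    (Sp Sm : Set A)
    (hSp_iso : ∀ {X Y : A}, (X ≅ Y) → X ∈ Sp → Y ∈ Sp)
    (hSm_iso : ∀ {X Y : A}, (X ≅ Y) → X ∈ Sm → Y ∈ Sm)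
    (hSp_simple : ∀ X ∈ Sp, Simple X) (hSm_simple : ∀ X ∈ Sm, Simple X)
    (hpartition : ∀ X : A, Simple X → (X ∈ Sp ∧ X ∉ Sm) ∨ (X ∈ Sm ∧ X ∉ Sp))
    -- `Ext¹(G, G') = 0` for `G ∈ Sm`, `G' ∈ Sp`: every short exact sequence splits
    (hext : ∀ (S : ShortComplex A), S.ShortExact → S.X₁ ∈ Sp → S.X₃ ∈ Sm →
      ∃ r : S.X₂ ⟶ S.X₁, S.f ≫ r = 𝟙 S.X₁) :
    ∃ σ : ∀ F : A, Subobject F,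
      (∀ F : A,
        (∀ S : A, IsCompositionFactor S ((σ F : A)) → S ∈ Sm) ∧
        (∀ S : A, IsCompositionFactor S (cokernel (σ F).arrow) → S ∈ Sp)) ∧
      -- uniqueness
      (∀ (F : A) (F'' : Subobject F),
        (∀ S : A, IsCompositionFactor S ((F'' : A)) → S ∈ Sm) →
        (∀ S : A, IsCompositionFactor S (cokernel F''.arrow) → S ∈ Sp) →
        F'' = σ F) ∧
      -- functoriality: any morphism `F ⟶ G` carries `σ F` into `σ G`
      (∀ (F G : A) (φ : F ⟶ G), (σ G).Factors ((σ F).arrow ≫ φ)) :=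
  bbd_filtration_lemma_general hNoeth hArt Sp Sm hSm_iso hSm_simple hpartition hext
end

section
/- Let D be a triangulated category with a bounded t-structure with heart M and cohomology functors h^i : D → M. Let F ∈ D, and suppose that for all integers i < j, Hom(h^j(F), h^i(F)[j+1-i]) = 0. Then F is isomorphic to the direct sum ⊕_{i∈ℤ} h^i(F)[-i]. -/
open CategoryTheory Limits Pretriangulated Triangulated

universe v u

/-!
Climb the truncation tower `Fk (k - 1) → Fk k → (H k)⟦-k⟧ → (Fk (k - 1))⟦1⟧`. A distinguished
triangle splits as soon as its connecting morphism vanishes. Inductively `Fk (k - 1)` is the sum of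
the `(H i)⟦-i⟧` with `i < k`, so each component of the connecting morphism is, up to shifting, a
morphism `H k ⟶ (H i)⟦k + 1 - i⟧`, which vanishes by hypothesis.
-/

section Shift

variable {D : Type u} [Category.{v} D] [Preadditive D] [HasShift D ℤ]
  [∀ n : ℤ, (shiftFunctor D n).Additive]

lemma shift_shift_hom_eq_zero {A B : D} {p : ℤ} (hz : ∀ f : A ⟶ B⟦p⟧, f = 0) {m s n : ℤ}
    (h : p + m = s + n) (g : A⟦m⟧ ⟶ B⟦s⟧⟦n⟧) : g = 0 := by
  let e : B⟦p⟧⟦m⟧ ≅ B⟦s⟧⟦n⟧ :=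
    (shiftFunctorAdd' D p m (s + n) h).symm.app B ≪≫ (shiftFunctorAdd' D s n (s + n) rfl).app B
  obtain ⟨f, hf⟩ := (shiftFunctor D m).map_surjective (g ≫ e.inv)
  rw [← cancel_mono e.inv, zero_comp, ← hf, hz f, Functor.map_zero]

end Shift

section Biproduct

variable {C : Type u} [Category.{v} C] [HasZeroMorphisms C]

noncomputable def biproductOptionIso {J : Type} [DecidableEq J]
    (f : Option J → C) [HasBiproduct f] [HasBiproduct fun j : J => f (some j)]
    [HasBinaryBiproduct (⨁ fun j : J => f (some j)) (f none)] :
    ⨁ f ≅ (⨁ fun j : J => f (some j)) ⊞ f none where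
  hom := biproduct.desc fun
    | none => biprod.inr
    | some j => biproduct.ι (fun j : J => f (some j)) j ≫ biprod.inl
  inv := biprod.desc (biproduct.desc fun j => biproduct.ι f (some j)) (biproduct.ι f none)
  hom_inv_id := by
    ext o o'
    rcases o with _ | j <;> rcases o' with _ | j' <;> simp [biproduct.ι_π]
  inv_hom_id := by
    ext <;> simp [biproduct.ι_π]

noncomputable def biproductInsertIso [HasFiniteBiproducts C] [HasBinaryBiproducts C]
    {α : Type} [DecidableEq α] {s t : Finset α} {x : α} (hx : x ∉ s) (ht : insert x s = t)
    (f : α → C) :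
    (⨁ fun i : t => f i) ≅ (⨁ fun i : s => f i) ⊞ f x := by
  subst ht
  exact (biproduct.whiskerEquiv (Finset.subtypeInsertEquivOption hx).symm
      (fun | none => Iso.refl _ | some _ => Iso.refl _)).symm ≪≫
    biproductOptionIso (fun o : Option s => o.elim (f x) fun i => f i)

end Biproduct

section Pretriangulated

variable {D : Type u} [Category.{v} D] [Preadditive D] [HasShift D ℤ]
  [∀ n : ℤ, (shiftFunctor D n).Additive] [HasFiniteBiproducts D]

lemma hom_shift_eq_zero_of_iso_biproduct {J : Type} [Finite J] {f : J → D} {X Y : D}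
    (e : X ≅ ⨁ f) {n : ℤ} (hf : ∀ j, ∀ g : Y ⟶ (f j)⟦n⟧, g = 0) (w : Y ⟶ X⟦n⟧) : w = 0 := by
  rw [← cancel_mono ((shiftFunctor D n).mapIso e ≪≫ (shiftFunctor D n).mapBiproduct f).hom,
    zero_comp]
  exact biproduct.hom_ext _ _ fun j => by rw [zero_comp]; exact hf j _

lemma nonempty_iso_biproduct_Icc_add_one [HasZeroObject D] [Pretriangulated D] (G : ℤ → D)
    {a k : ℤ} (hak : a ≤ k + 1) {X Y : D}
    (e : X ≅ ⨁ fun i : (Finset.Icc a k : Finset ℤ) => G i)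
    {u : X ⟶ Y} {v : Y ⟶ G (k + 1)} {w : G (k + 1) ⟶ X⟦(1 : ℤ)⟧}
    (hT : Triangle.mk u v w ∈ distTriang D)
    (hG : ∀ i ≤ k, ∀ g : G (k + 1) ⟶ (G i)⟦(1 : ℤ)⟧, g = 0) :
    Nonempty (Y ≅ ⨁ fun i : (Finset.Icc a (k + 1) : Finset ℤ) => G i) := by
  have hw : w = 0 := hom_shift_eq_zero_of_iso_biproduct e
    (fun i => hG i (Finset.mem_Icc.1 i.2).2) w
  obtain ⟨eY, -, -⟩ := exists_iso_binaryBiproduct_of_distTriang _ hT hw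
  exact ⟨eY ≪≫ biprod.mapIso e (Iso.refl _) ≪≫ (biproductInsertIso (by simp)
    (Finset.insert_Icc_right_eq_Icc_add_one hak) G).symm⟩

end Pretriangulated

/-- Let `D` be a triangulated category with a bounded t-structure `t`, with heart
`M` and cohomology functors `h^i`.  Let `F ∈ D` with cohomology objects `H i = h^i(F)`
(encoded by the tower of truncations `Fk k = τ_{≤k} F` together with the truncation triangles
`τ_{≤k-1}F → τ_{≤k}F → h^k(F)[-k] →`).  If `Hom(h^j(F), h^i(F)[j+1-i]) = 0` for all
`i < j`, then `F ≅ ⨁_{i} h^i(F)[-i]`. -/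
theorem decomposition_of_hom_vanishing
    {D : Type u} [Category.{v} D] [HasZeroObject D] [Preadditive D] [HasShift D ℤ]
    [∀ n : ℤ, (shiftFunctor D n).Additive] [Pretriangulated D] [HasFiniteBiproducts D]
    (t : TStructure D)
    -- the t-structure is bounded
    (hbounded : ∀ X : D, ∃ m n : ℤ, t.le n X ∧ t.ge m X)
    (F : D)
    -- the cohomology objects `H i = h^i F`, lying in the heart of `t`
    (H : ℤ → D) (hheart : ∀ i, t.le 0 (H i) ∧ t.ge 0 (H i))
    -- the truncation tower `Fk k = τ_{≤k} F` exhibiting the `H i` as the cohomologies of `F`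
    (Fk : ℤ → D) (a b : ℤ) (hab : a ≤ b)
    (hbot : IsZero (Fk (a - 1))) (htop : Nonempty (Fk b ≅ F))
    (hsupp : ∀ i : ℤ, (i < a ∨ b < i) → IsZero (H i))
    (htri : ∀ k : ℤ, ∃ (u : Fk (k - 1) ⟶ Fk k) (v : Fk k ⟶ (H k)⟦(-k : ℤ)⟧)
      (w : (H k)⟦(-k : ℤ)⟧ ⟶ (Fk (k - 1))⟦(1 : ℤ)⟧),
      Triangle.mk u v w ∈ distTriang D)
    -- the Hom-vanishing hypothesis `Hom(h^j(F), h^i(F)[j+1-i]) = 0` for `i < j`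
    (hvanish : ∀ i j : ℤ, i < j → ∀ f : H j ⟶ (H i)⟦(j + 1 - i : ℤ)⟧, f = 0) :
    Nonempty (F ≅ ⨁ fun i : (Finset.Icc a b : Finset ℤ) => (H i)⟦(-(i : ℤ) : ℤ)⟧) := by
  have tower : ∀ k, a - 1 ≤ k →
      Nonempty (Fk k ≅ ⨁ fun i : (Finset.Icc a k : Finset ℤ) => (H i)⟦(-(i : ℤ) : ℤ)⟧) := by
    intro k hk
    induction k, hk using Int.leInduction with
    | base => exact ⟨hbot.iso ((IsZero.iff_id_eq_zero _).2 <|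
        biproduct.hom_ext _ _ fun i => absurd (Finset.mem_Icc.1 i.2) (by omega))⟩
    | succ k hk ih =>
      obtain ⟨e⟩ := ih
      obtain ⟨u, v, w, hT⟩ := add_sub_cancel_right k 1 ▸ htri (k + 1)
      exact nonempty_iso_biproduct_Icc_add_one (fun i => (H i)⟦-i⟧) (by omega) e hT
        fun i hi g => shift_shift_hom_eq_zero (hvanish i (k + 1) (by omega)) (by ring) g
  obtain ⟨etop⟩ := htop
  obtain ⟨e⟩ := tower b (by omega)
  exact ⟨etop.symm ≪≫ e⟩
end

section
/- Let H be a linear algebraic group with unipotent radical U over an algebraically closed field, and let T be a maximal torus of the radical of H. Suppose O_{≤0} denotes the span in the coordinate ring O_H of all T-weight spaces of weight χ with ⟨φ,χ⟩ ≤ 0, for a semifocused cocharacter φ. Then O_{≤0} is a Hopf subalgebra of O_H, and hence H' = Spec O_{≤0} is an affine algebraic group equipped with a surjective homomorphism H → H'. -/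
/-!
Every weight `χ` occurring in `O_H` has `-χ ∈ ℕΥ`, so semifocusedness of `φ` forces `⟨φ,χ⟩ ≥ 0`.
Hence the nonzero weight spaces spanning `O_{≤0}` all have `⟨φ,χ⟩ = 0`, and the set of such
weights is closed under sums and under splitting a weight into two occurring weights. The
weight-preserving structure maps therefore preserve `O_{≤0}`.
-/

open TensorProduct

universe u v

theorem AddMonoidHom.map_nonpos_of_mem_closure {Λ M : Type*} [AddCommMonoid Λ] [AddCommMonoid M]
    [PartialOrder M] [IsOrderedAddMonoid M] (φ : Λ →+ M) {Υ : Set Λ} (hΥ : ∀ υ ∈ Υ, φ υ ≤ 0)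
    {χ : Λ} (hχ : χ ∈ AddSubmonoid.closure Υ) : φ χ ≤ 0 := by
  induction hχ using AddSubmonoid.closure_induction with
  | mem υ hυ => exact hΥ υ hυ
  | zero => simp
  | add _ _ _ _ h₁ h₂ => simpa using add_nonpos h₁ h₂

namespace Submodule

variable {R Λ : Type*} [CommSemiring R]

theorem biSup_mul_biSup_le_of_add_mem [AddCommMonoid Λ] {A : Type*} [Semiring A] [Algebra R A]
    {g : Λ → Submodule R A} (hmul : ∀ χ₁ χ₂, g χ₁ * g χ₂ ≤ g (χ₁ + χ₂))
    {s : Set Λ} (hs : ∀ χ₁ ∈ s, ∀ χ₂ ∈ s, χ₁ + χ₂ ∈ s) :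
    (⨆ χ ∈ s, g χ) * (⨆ χ ∈ s, g χ) ≤ ⨆ χ ∈ s, g χ := by
  simp only [iSup_mul, mul_iSup, iSup_le_iff]
  exact fun χ₂ h₂ χ₁ h₁ => (hmul χ₁ χ₂).trans (le_biSup g (hs χ₁ h₁ χ₂ h₂))

variable {M : Type*} [AddCommMonoid M] [Module R M] {g : Λ → Submodule R M} {s : Set Λ}

theorem map_biSup_le_of_map_le {f : M →ₗ[R] M} (hf : ∀ χ ∈ s, (g χ).map f ≤ g χ) :
    (⨆ χ ∈ s, g χ).map f ≤ ⨆ χ ∈ s, g χ := by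
  simp only [map_iSup]
  exact iSup₂_mono hf

theorem apply_mem_span_tmul_of_mem_biSup [AddCommMonoid Λ] {f : M →ₗ[R] M ⊗[R] M}
    (hf : ∀ χ ∈ s, ∀ x ∈ g χ, f x ∈ span R {t | ∃ (χ₁ χ₂ : Λ) (a b : M),
      a ∈ g χ₁ ∧ b ∈ g χ₂ ∧ χ₁ + χ₂ = χ ∧ t = a ⊗ₜ[R] b})
    (hsplit : ∀ χ₁ χ₂, χ₁ + χ₂ ∈ s → g χ₁ ≠ ⊥ → g χ₂ ≠ ⊥ → χ₁ ∈ s ∧ χ₂ ∈ s)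
    {x : M} (hx : x ∈ ⨆ χ ∈ s, g χ) :
    f x ∈ span R {t | ∃ a ∈ ⨆ χ ∈ s, g χ, ∃ b ∈ ⨆ χ ∈ s, g χ, t = a ⊗ₜ[R] b} := by
  suffices h : ⨆ χ ∈ s, g χ ≤ comap f (span R _) from h hx
  refine iSup₂_le fun χ hχ y hy => mem_comap.mpr <| span_le.mpr ?_ (hf χ hχ y hy)
  rintro _ ⟨χ₁, χ₂, a, b, ha, hb, rfl, rfl⟩
  obtain rfl | ha₀ := eq_or_ne a 0
  · simp
  obtain rfl | hb₀ := eq_or_ne b 0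
  · simp
  obtain ⟨h₁, h₂⟩ :=
    hsplit χ₁ χ₂ hχ ((g χ₁).ne_bot_iff.mpr ⟨a, ha, ha₀⟩) ((g χ₂).ne_bot_iff.mpr ⟨b, hb, hb₀⟩)
  exact subset_span ⟨a, le_biSup g h₁ ha, b, le_biSup g h₂ hb, rfl⟩

end Submodule

theorem weight_truncation_is_Hopf_subalgebra_general
    (k : Type u) [Field k]
    (Λ : Type v) [AddCommGroup Λ]
    (O : Type u) [CommRing O] [HopfAlgebra k O]
    (g : Λ → Submodule k O)
    (Υ : Set Λ) (φ : Λ →+ ℤ)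
    -- `φ` is semifocused
    (hsemi : ∀ υ ∈ Υ, φ υ ≤ 0)
    -- the `T`-weights of `O_H` lie in `-ℕΥ`
    (hweights : ∀ χ : Λ, g χ ≠ ⊥ → -χ ∈ AddSubmonoid.closure Υ)
    -- the algebra structure is `T`-equivariant (graded)
    (hone : (1 : O) ∈ g 0)
    (hmul : ∀ (χ₁ χ₂ : Λ) (a b : O), a ∈ g χ₁ → b ∈ g χ₂ → a * b ∈ g (χ₁ + χ₂))
    -- the comultiplication is `T`-equivariant (weight-preserving)
    (hcomul : ∀ (χ : Λ) (x : O), x ∈ g χ → Coalgebra.comul (R := k) x ∈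
      Submodule.span k {t : O ⊗[k] O | ∃ (χ₁ χ₂ : Λ) (a b : O),
        a ∈ g χ₁ ∧ b ∈ g χ₂ ∧ χ₁ + χ₂ = χ ∧ t = a ⊗ₜ[k] b})
    -- the antipode is `T`-equivariant (weight-preserving)
    (hantipode : ∀ (χ : Λ) (x : O), x ∈ g χ →
      HopfAlgebra.antipode (R := k) x ∈ g χ) :
    -- conclusion: `O_{≤0} = ⨆_{⟨φ,χ⟩ ≤ 0} g χ` is a Hopf subalgebra
    (1 : O) ∈ (⨆ χ ∈ {χ : Λ | φ χ ≤ 0}, g χ) ∧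
    (∀ a b : O, a ∈ (⨆ χ ∈ {χ : Λ | φ χ ≤ 0}, g χ) →
      b ∈ (⨆ χ ∈ {χ : Λ | φ χ ≤ 0}, g χ) → a * b ∈ (⨆ χ ∈ {χ : Λ | φ χ ≤ 0}, g χ)) ∧
    (∀ x : O, x ∈ (⨆ χ ∈ {χ : Λ | φ χ ≤ 0}, g χ) → Coalgebra.comul (R := k) x ∈
      Submodule.span k {t : O ⊗[k] O | ∃ a ∈ (⨆ χ ∈ {χ : Λ | φ χ ≤ 0}, g χ),
        ∃ b ∈ (⨆ χ ∈ {χ : Λ | φ χ ≤ 0}, g χ), t = a ⊗ₜ[k] b}) ∧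
    (∀ x : O, x ∈ (⨆ χ ∈ {χ : Λ | φ χ ≤ 0}, g χ) →
      HopfAlgebra.antipode (R := k) x ∈ (⨆ χ ∈ {χ : Λ | φ χ ≤ 0}, g χ)) := by
  have hweight_nonneg : ∀ χ, g χ ≠ ⊥ → 0 ≤ φ χ := fun χ hχ => by
    simpa using φ.map_nonpos_of_mem_closure hsemi (hweights χ hχ)
  refine ⟨le_biSup g (show φ 0 ≤ 0 by simp) hone, fun a b ha hb => ?_,
    fun x hx => ?_, fun x hx => ?_⟩
  · refine Submodule.mul_le.mp (Submodule.biSup_mul_biSup_le_of_add_mem ?_ ?_) a ha b hb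
    · exact fun χ₁ χ₂ => Submodule.mul_le.mpr fun a ha b hb => hmul χ₁ χ₂ a b ha hb
    · intro χ₁ h₁ χ₂ h₂
      simpa using add_nonpos h₁ h₂
  · refine Submodule.apply_mem_span_tmul_of_mem_biSup (fun χ _ => hcomul χ) ?_ hx
    intro χ₁ χ₂ h h₁ h₂
    have h₁' := hweight_nonneg χ₁ h₁
    have h₂' := hweight_nonneg χ₂ h₂
    simp only [Set.mem_ofPred_eq, map_add] at h ⊢
    omega
  · exact Submodule.map_biSup_le_of_map_le
      (fun χ _ => Submodule.map_le_iff_le_comap.mpr (hantipode χ)) (Submodule.mem_map_of_mem hx)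

/-- from the proof of Theorem 6.6: Let `H` be a linear algebraic group with
unipotent radical `U` over an algebraically closed field `k`, and let `T` be a maximal torus
of the radical of `H`.  Model: `O` is the coordinate Hopf algebra `O_H`, with the `T`-action
`(t·f)(h) = f(t⁻¹ht)` recorded as a direct-sum decomposition `g : Λ → Submodule k O` by the
character lattice `Λ = X(T)`; multiplication, comultiplication and antipode are
`T`-equivariant (weight-preserving), the weights of `O_H` lie in `-ℕΥ` where `Υ` is the set
of `T`-weights on `Lie U`, and `φ ∈ Y(T)` is a semifocused cocharacter (`⟨φ,υ⟩ ≤ 0` on `Υ`).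
Then the span `O_{≤0}` of the weight spaces of weight `χ` with `⟨φ,χ⟩ ≤ 0` is a Hopf
subalgebra of `O_H` (closed under `1`, multiplication, comultiplication and the antipode);
hence `H' = Spec O_{≤0}` is an affine algebraic group with a surjection `H → H'`. -/
theorem weight_truncation_is_Hopf_subalgebra
    (k : Type u) [Field k] [IsAlgClosed k]
    (Λ : Type v) [AddCommGroup Λ] [DecidableEq Λ]
    (O : Type u) [CommRing O] [HopfAlgebra k O]
    (g : Λ → Submodule k O) (hg : DirectSum.IsInternal g)
    (Υ : Set Λ) (φ : Λ →+ ℤ)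
    -- `φ` is semifocused
    (hsemi : ∀ υ ∈ Υ, φ υ ≤ 0)
    -- the `T`-weights of `O_H` lie in `-ℕΥ`
    (hweights : ∀ χ : Λ, g χ ≠ ⊥ → -χ ∈ AddSubmonoid.closure Υ)
    -- the algebra structure is `T`-equivariant (graded)
    (hone : (1 : O) ∈ g 0)
    (hmul : ∀ (χ₁ χ₂ : Λ) (a b : O), a ∈ g χ₁ → b ∈ g χ₂ → a * b ∈ g (χ₁ + χ₂))
    -- the comultiplication is `T`-equivariant (weight-preserving)
    (hcomul : ∀ (χ : Λ) (x : O), x ∈ g χ → Coalgebra.comul (R := k) x ∈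
      Submodule.span k {t : O ⊗[k] O | ∃ (χ₁ χ₂ : Λ) (a b : O),
        a ∈ g χ₁ ∧ b ∈ g χ₂ ∧ χ₁ + χ₂ = χ ∧ t = a ⊗ₜ[k] b})
    -- the antipode is `T`-equivariant (weight-preserving)
    (hantipode : ∀ (χ : Λ) (x : O), x ∈ g χ →
      HopfAlgebra.antipode (R := k) x ∈ g χ) :
    -- conclusion: `O_{≤0} = ⨆_{⟨φ,χ⟩ ≤ 0} g χ` is a Hopf subalgebra
    (1 : O) ∈ (⨆ χ ∈ {χ : Λ | φ χ ≤ 0}, g χ) ∧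
    (∀ a b : O, a ∈ (⨆ χ ∈ {χ : Λ | φ χ ≤ 0}, g χ) →
      b ∈ (⨆ χ ∈ {χ : Λ | φ χ ≤ 0}, g χ) → a * b ∈ (⨆ χ ∈ {χ : Λ | φ χ ≤ 0}, g χ)) ∧
    (∀ x : O, x ∈ (⨆ χ ∈ {χ : Λ | φ χ ≤ 0}, g χ) → Coalgebra.comul (R := k) x ∈
      Submodule.span k {t : O ⊗[k] O | ∃ a ∈ (⨆ χ ∈ {χ : Λ | φ χ ≤ 0}, g χ),
        ∃ b ∈ (⨆ χ ∈ {χ : Λ | φ χ ≤ 0}, g χ), t = a ⊗ₜ[k] b}) ∧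
    (∀ x : O, x ∈ (⨆ χ ∈ {χ : Λ | φ χ ≤ 0}, g χ) →
      HopfAlgebra.antipode (R := k) x ∈ (⨆ χ ∈ {χ : Λ | φ χ ≤ 0}, g χ)) :=
  weight_truncation_is_Hopf_subalgebra_general k Λ O g Υ φ hsemi hweights hone hmul hcomul hantipode
end

section
/- Let D be a triangulated category carrying both a baric structure (D_{≤w}, D_{≥w}) and a t-structure (D^{≤n}, D^{≥n}) such that the baric truncation β_{≥w} is left t-exact and the t-truncation τ_{≥n} is 'right baryexact' (preserves D_{≤w}). Define D^{[≤n]}_{≤w} = (D^{≤n} * D_{≤w-1}) ∩ D_{≤w} and D^{[≥n]}_{≥w} = D^{≥n} ∩ D_{≥w}, and let P_w = D_{≤w} ∩ D_{≥w} be the category of pure objects of degree w. Then (D^{[≤0]}_{≤w} ∩ P_w, D^{[≥0]}_{≥w} ∩ P_w) is a t-structure on the triangulated category P_w. -/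
/-!
Truncate `X ∈ P_w` in two steps: `X → G = τ_{≥1} X` stays in `D_{≤w}` by right baryexactness
of `τ_{≥1}`, and `G → G₂ = β_{≥w} G` lands in `D^{≥1} ∩ P_w` by left t-exactness of `β_{≥w}`.
Let `F` be the fiber of `X → G₂`. For `Z ∈ D^{≥1} ∩ D_{≥w}`, neither `τ_{≤0} X` nor
`β_{≤w-1} G` (nor their shifts) map nontrivially to `Z` or `Z⟦1⟧`, so `Hom(G₂, Z) → Hom(X, Z)`
is onto and `Hom(G₂, Z⟦1⟧) → Hom(X, Z⟦1⟧)` is injective; hence `Hom(F, Z) = 0`.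
Lacking the octahedron axiom, `F ∈ D^{≤0} * D_{≤w-1}` is read off the t-truncation
`τ_{≤0} F → F → τ_{≥1} F` instead: the map `τ_{≥1} F → β_{≥w} τ_{≥1} F` vanishes, its target
lying in `D^{≥1} ∩ D_{≥w}`, so `τ_{≥1} F ∈ D_{≤w-1}`.
-/

open CategoryTheory Limits Pretriangulated Triangulated

universe v u

variable {D : Type u} [Category.{v} D] [HasZeroObject D] [Preadditive D] [HasShift D ℤ]
  [∀ n : ℤ, (shiftFunctor D n).Additive] [Pretriangulated D] [HasBinaryBiproducts D]

/-- A (bounded) baric structure on a triangulated category `D`. -/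
structure BaricStructure (D : Type u) [Category.{v} D] [HasZeroObject D] [Preadditive D]
    [HasShift D ℤ] [∀ n : ℤ, (shiftFunctor D n).Additive] [Pretriangulated D]
    [HasBinaryBiproducts D] where
  le : ℤ → Set D
  ge : ℤ → Set D
  le_iso {w : ℤ} {X Y : D} (e : X ≅ Y) : X ∈ le w → Y ∈ le w
  ge_iso {w : ℤ} {X Y : D} (e : X ≅ Y) : X ∈ ge w → Y ∈ ge w
  le_zero (w : ℤ) (Z : D) (hZ : IsZero Z) : Z ∈ le w
  ge_zero (w : ℤ) (Z : D) (hZ : IsZero Z) : Z ∈ ge w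
  le_shift (w : ℤ) (n : ℤ) (X : D) : X ∈ le w → X⟦n⟧ ∈ le w
  ge_shift (w : ℤ) (n : ℤ) (X : D) : X ∈ ge w → X⟦n⟧ ∈ ge w
  le_ext₂ (w : ℤ) (T : Triangle D) (hT : T ∈ distTriang D) :
    T.obj₁ ∈ le w → T.obj₃ ∈ le w → T.obj₂ ∈ le w
  ge_ext₂ (w : ℤ) (T : Triangle D) (hT : T ∈ distTriang D) :
    T.obj₁ ∈ ge w → T.obj₃ ∈ ge w → T.obj₂ ∈ ge w
  le_summand (w : ℤ) (X Y : D) : (X ⊞ Y) ∈ le w → X ∈ le w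
  ge_summand (w : ℤ) (X Y : D) : (X ⊞ Y) ∈ ge w → X ∈ ge w
  le_mono (w : ℤ) : le w ⊆ le (w + 1)
  ge_antitone (w : ℤ) : ge (w + 1) ⊆ ge w
  hom_zero {w : ℤ} {A B : D} (hA : A ∈ le w) (hB : B ∈ ge (w + 1)) (f : A ⟶ B) : f = 0
  exists_triangle (X : D) (w : ℤ) : ∃ (A B : D) (f : A ⟶ X) (g : X ⟶ B)
    (h : B ⟶ A⟦(1 : ℤ)⟧), (Triangle.mk f g h ∈ distTriang D) ∧ A ∈ le w ∧ B ∈ ge (w + 1)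
  bounded (X : D) : ∃ v w : ℤ, X ∈ ge v ∧ X ∈ le w

/-- The `*` operation on classes of objects of a triangulated category (BBD 1.3.9):
`X ∈ S * T` iff there is a distinguished triangle `A → X → B →` with `A ∈ S`, `B ∈ T`. -/
def starOp (S T : Set D) : Set D :=
  { X | ∃ (A B : D) (f : A ⟶ X) (g : X ⟶ B) (h : B ⟶ A⟦(1 : ℤ)⟧),
      (Triangle.mk f g h ∈ distTriang D) ∧ A ∈ S ∧ B ∈ T }

section

omit [HasBinaryBiproducts D]

lemma Triangle.yoneda_exact₁ (T : Triangle D) (hT : T ∈ distTriang D) {Z : D}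
    (f : T.obj₁ ⟶ Z) (hf : T.mor₃ ≫ f⟦(1 : ℤ)⟧' = 0) : ∃ g : T.obj₂ ⟶ Z, f = T.mor₁ ≫ g := by
  obtain ⟨g, hg⟩ : ∃ g : T.obj₂⟦(1 : ℤ)⟧ ⟶ Z⟦(1 : ℤ)⟧, f⟦(1 : ℤ)⟧' = (-T.mor₁⟦(1 : ℤ)⟧') ≫ g :=
    Triangle.yoneda_exact₂ _ (rot_of_distTriang _ (rot_of_distTriang _ hT)) _ hf
  obtain ⟨g', hg'⟩ := (shiftFunctor D (1 : ℤ)).map_surjective (-g)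
  refine ⟨g', (shiftFunctor D (1 : ℤ)).map_injective ?_⟩
  simp [hg, hg']

lemma Triangle.eq_zero_of_mor₂_comp_eq_zero (T : Triangle D) (hT : T ∈ distTriang D) {Z : D}
    (h₁ : ∀ g : T.obj₁⟦(1 : ℤ)⟧ ⟶ Z, g = 0) {m : T.obj₃ ⟶ Z} (hm : T.mor₂ ≫ m = 0) : m = 0 := by
  obtain ⟨g, rfl⟩ := Triangle.yoneda_exact₃ _ hT m hm
  rw [h₁ g, comp_zero]

lemma Triangle.eq_zero_of_obj₁_of_obj₃ (T : Triangle D) (hT : T ∈ distTriang D) {Z : D}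
    (h₁ : ∀ g : T.obj₁ ⟶ Z, g = 0) (h₃ : ∀ g : T.obj₃ ⟶ Z, g = 0) (f : T.obj₂ ⟶ Z) : f = 0 := by
  obtain ⟨g, rfl⟩ := Triangle.yoneda_exact₂ _ hT f (h₁ _)
  rw [h₃ g, comp_zero]

lemma Triangle.eq_zero_of_mor₂_surjective_injective (T : Triangle D) (hT : T ∈ distTriang D)
    {Z : D} (hsurj : ∀ h : T.obj₂ ⟶ Z, ∃ l : T.obj₃ ⟶ Z, h = T.mor₂ ≫ l)
    (hinj : ∀ m : T.obj₃ ⟶ Z⟦(1 : ℤ)⟧, T.mor₂ ≫ m = 0 → m = 0) (f : T.obj₁ ⟶ Z) : f = 0 := by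
  obtain ⟨h, rfl⟩ := Triangle.yoneda_exact₁ T hT f
    (hinj _ (by rw [← Category.assoc, comp_distTriang_mor_zero₂₃ _ hT, zero_comp]))
  obtain ⟨l, rfl⟩ := hsurj h
  rw [← Category.assoc, comp_distTriang_mor_zero₁₂ _ hT, zero_comp]

@[gcongr]
lemma starOp_mono {S S' T T' : Set D} (hS : S ⊆ S') (hT : T ⊆ T') : starOp S T ⊆ starOp S' T' :=
  fun _ ⟨A, B, f, g, h, hdist, hA, hB⟩ => ⟨A, B, f, g, h, hdist, hS hA, hT hB⟩

end

lemma BaricStructure.hom_eq_zero_of_le_pred (b : BaricStructure D) {w : ℤ} {A B : D}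
    (hA : A ∈ b.le (w - 1)) (hB : B ∈ b.ge w) (f : A ⟶ B) : f = 0 :=
  b.hom_zero hA (by rwa [sub_add_cancel]) f

lemma BaricStructure.mem_le_of_mor₂_eq_zero (b : BaricStructure D) {w : ℤ} {A X B : D}
    {u : A ⟶ X} {v : X ⟶ B} {e : B ⟶ A⟦(1 : ℤ)⟧} (hT : Triangle.mk u v e ∈ distTriang D)
    (hA : A ∈ b.le w) (hB : B ∈ b.ge (w + 1)) (hv : v = 0) : X ∈ b.le w := by
  have hB₀ : IsZero B := by
    rw [IsZero.iff_id_eq_zero]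
    exact Triangle.eq_zero_of_mor₂_comp_eq_zero _ hT
      (fun g => b.hom_zero (b.le_shift w 1 A hA) hB g) (by subst hv; exact zero_comp)
  have : IsIso u := (Triangle.isZero₃_iff_isIso₁ _ hT).1 hB₀
  exact b.le_iso (asIso u) hA

def BaricStructure.TruncGEIsLeftTExact (b : BaricStructure D) (t : TStructure D) : Prop :=
  ∀ (w n : ℤ) (T : Triangle D), T ∈ distTriang D → T.obj₁ ∈ b.le w →
    T.obj₃ ∈ b.ge (w + 1) → t.ge n T.obj₂ → t.ge n T.obj₃

def BaricStructure.TTruncGEIsRightBaryexact (b : BaricStructure D) (t : TStructure D) : Prop :=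
  ∀ (w n : ℤ) (T : Triangle D), T ∈ distTriang D → t.le (n - 1) T.obj₁ →
    t.ge n T.obj₃ → T.obj₂ ∈ b.le w → T.obj₃ ∈ b.le w

section Purified

variable (b : BaricStructure D) (t : TStructure D) {w n : ℤ}

lemma hom_eq_zero_of_mem_starOp {A B : D} (hA : A ∈ starOp {X | t.le n X} (b.le (w - 1)))
    (hB : t.ge (n + 1) B) (hBw : B ∈ b.ge w) (f : A ⟶ B) : f = 0 := by
  obtain ⟨A₁, A₂, i, j, k, hT, hA₁, hA₂⟩ := hA
  exact Triangle.eq_zero_of_obj₁_of_obj₃ _ hT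
    (fun g => t.zero_of_isLE_of_isGE g n (n + 1) (by omega) ⟨hA₁⟩ ⟨hB⟩)
    (fun g => b.hom_eq_zero_of_le_pred hA₂ hBw g) f

lemma hom_eq_zero_of_fiber {X A₀ G G₁ G₂ F Z : D} {a : A₀ ⟶ X} {x : X ⟶ G}
    {c : G ⟶ A₀⟦(1 : ℤ)⟧} {u : G₁ ⟶ G} {v : G ⟶ G₂} {e : G₂ ⟶ G₁⟦(1 : ℤ)⟧} {p : F ⟶ X}
    {r : G₂ ⟶ F⟦(1 : ℤ)⟧} (hT₁ : Triangle.mk a x c ∈ distTriang D) (hA₀ : t.le n A₀)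
    (hT₂ : Triangle.mk u v e ∈ distTriang D) (hG₁ : G₁ ∈ b.le (w - 1))
    (hT₃ : Triangle.mk p (x ≫ v) r ∈ distTriang D)
    (hZ : t.ge (n + 1) Z) (hZw : Z ∈ b.ge w) (f : F ⟶ Z) : f = 0 := by
  refine Triangle.eq_zero_of_mor₂_surjective_injective _ hT₃ (fun h => ?_)
    (fun (m : G₂ ⟶ Z⟦(1 : ℤ)⟧) hm => ?_) f
  · obtain ⟨k, rfl⟩ := Triangle.yoneda_exact₂ _ hT₁ h
      (t.zero_of_isLE_of_isGE _ n (n + 1) (by omega) ⟨hA₀⟩ ⟨hZ⟩)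
    obtain ⟨l, rfl⟩ := Triangle.yoneda_exact₂ _ hT₂ k (b.hom_eq_zero_of_le_pred hG₁ hZw _)
    exact ⟨l, (Category.assoc _ _ _).symm⟩
  · have hvm : v ≫ m = 0 := Triangle.eq_zero_of_mor₂_comp_eq_zero _ hT₁
      (fun g => t.zero_of_isLE_of_isGE g (n - 1) n (by omega)
        ⟨t.le_shift n 1 (n - 1) (by omega) _ hA₀⟩ ⟨t.ge_shift (n + 1) 1 n (by omega) _ hZ⟩)
      (by change x ≫ v ≫ m = 0; rw [← Category.assoc]; exact hm)
    exact Triangle.eq_zero_of_mor₂_comp_eq_zero _ hT₂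
      (fun g => b.hom_eq_zero_of_le_pred (b.le_shift _ 1 _ hG₁) (b.ge_shift w 1 Z hZw) g) hvm

lemma mem_starOp_of_hom_eq_zero (hβ : b.TruncGEIsLeftTExact t) {F : D}
    (hF : ∀ Z, t.ge (n + 1) Z → Z ∈ b.ge w → ∀ f : F ⟶ Z, f = 0) :
    F ∈ starOp {X | t.le n X} (b.le (w - 1)) := by
  obtain ⟨A, B, hA, hB, α, β, γ, hT⟩ := t.exists_triangle F n (n + 1) rfl
  obtain ⟨B₁, B₂, u, v, e, hT', hB₁, hB₂⟩ := b.exists_triangle B (w - 1)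
  have hB₂t : t.ge (n + 1) B₂ := hβ _ _ _ hT' hB₁ hB₂ hB
  rw [sub_add_cancel] at hB₂
  have hv : v = 0 := Triangle.eq_zero_of_mor₂_comp_eq_zero _ hT
    (fun g => t.zero_of_isLE_of_isGE g (n - 1) (n + 1) (by omega)
      ⟨t.le_shift n 1 (n - 1) (by omega) _ hA⟩ ⟨hB₂t⟩) (hF B₂ hB₂t hB₂ _)
  exact ⟨A, B, α, β, γ, hT, hA, b.mem_le_of_mor₂_eq_zero hT' hB₁ (by rwa [sub_add_cancel]) hv⟩

lemma exists_triangle_purified (hβ : b.TruncGEIsLeftTExact t)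
    (hτ : b.TTruncGEIsRightBaryexact t) {X : D} (hXle : X ∈ b.le w) (hXge : X ∈ b.ge w) :
    ∃ (F G : D) (f : F ⟶ X) (g : X ⟶ G) (h : G ⟶ F⟦(1 : ℤ)⟧), Triangle.mk f g h ∈ distTriang D ∧
      (F ∈ starOp {X | t.le n X} (b.le (w - 1)) ∧ F ∈ b.le w ∧ F ∈ b.ge w) ∧
      (t.ge (n + 1) G ∧ G ∈ b.le w ∧ G ∈ b.ge w) := by
  obtain ⟨A₀, G, hA₀, hG, a, x, c, hT₁⟩ := t.exists_triangle X n (n + 1) rfl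
  have hGle : G ∈ b.le w := hτ w (n + 1) _ hT₁ (by rwa [add_sub_cancel_right]) hG hXle
  obtain ⟨G₁, G₂, u, v, e, hT₂, hG₁, hG₂⟩ := b.exists_triangle G (w - 1)
  have hG₂t : t.ge (n + 1) G₂ := hβ _ _ _ hT₂ hG₁ hG₂ hG
  rw [sub_add_cancel] at hG₂
  have hG₂le : G₂ ∈ b.le w := b.le_ext₂ w _ (rot_of_distTriang _ hT₂) hGle
    (by simpa using b.le_mono _ (b.le_shift _ 1 _ hG₁))
  obtain ⟨F, p, r, hT₃⟩ := distinguished_cocone_triangle₁ (x ≫ v)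
  have hT₃' := inv_rot_of_distTriang _ hT₃
  refine ⟨F, G₂, p, x ≫ v, r, hT₃, ⟨?_, ?_, ?_⟩, hG₂t, hG₂le, hG₂⟩
  · exact mem_starOp_of_hom_eq_zero b t hβ fun Z hZ hZw f =>
      hom_eq_zero_of_fiber b t hT₁ hA₀ hT₂ hG₁ hT₃ hZ hZw f
  · exact b.le_ext₂ w _ hT₃' (b.le_shift w (-1) _ hG₂le) hXle
  · exact b.ge_ext₂ w _ hT₃' (b.ge_shift w (-1) _ hG₂) hXge

end Purified

theorem purified_standard_tStructure_general
    (b : BaricStructure D) (t : TStructure D) (w : ℤ)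
    -- `β_{≥ w'}` is left t-exact, for every `w'` (triangle formulation): in any baric
    -- truncation triangle of an object of `D^{≥ n}`, the third term is again in `D^{≥ n}`
    (hbeta : ∀ (w' n : ℤ) (T : Triangle D), T ∈ (distTriang D) → T.obj₁ ∈ b.le w' →
      T.obj₃ ∈ b.ge (w' + 1) → t.ge n T.obj₂ → t.ge n T.obj₃)
    -- `τ_{≥ n}` is right baryexact: in any t-truncation triangle of an object of `D_{≤ w'}`,
    -- the third term is again in `D_{≤ w'}`
    (htau : ∀ (w' n : ℤ) (T : Triangle D), T ∈ (distTriang D) → t.le (n - 1) T.obj₁ →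
      t.ge n T.obj₃ → T.obj₂ ∈ b.le w' → T.obj₃ ∈ b.le w')
    -- notation: the two halves of the purified standard t-structure on `P_w`
    (Lp Gp : ℤ → Set D)
    (hLp : ∀ n : ℤ, Lp n =
      (starOp ({X | t.le n X}) (b.le (w - 1)) ∩ b.le w) ∩ (b.le w ∩ b.ge w))
    (hGp : ∀ n : ℤ, Gp n = ({X | t.ge n X} ∩ b.ge w) ∩ (b.le w ∩ b.ge w)) :
    -- (i) nesting
    (∀ n : ℤ, Lp n ⊆ Lp (n + 1)) ∧ (∀ n : ℤ, Gp (n + 1) ⊆ Gp n) ∧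
    -- (ii) Hom-vanishing
    (∀ A ∈ Lp 0, ∀ B ∈ Gp 1, ∀ f : A ⟶ B, f = 0) ∧
    -- (iii) truncation triangles, within the pure category `P_w`
    (∀ X ∈ b.le w ∩ b.ge w, ∃ (A B : D) (f : A ⟶ X) (g : X ⟶ B) (h : B ⟶ A⟦(1 : ℤ)⟧),
      (Triangle.mk f g h ∈ distTriang D) ∧ A ∈ Lp 0 ∧ B ∈ Gp 1) := by
  refine ⟨fun n => ?_, fun n => ?_, fun A hA B hB f => ?_, fun X hX => ?_⟩
  · rw [hLp, hLp]
    gcongr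
    exact t.le_monotone (Int.le_add_one le_rfl) _
  · rw [hGp, hGp]
    gcongr
    exact t.ge_antitone (Int.le_add_one le_rfl) _
  · rw [hLp] at hA
    rw [hGp] at hB
    exact hom_eq_zero_of_mem_starOp b t hA.1.1 hB.1.1 hB.1.2 f
  · obtain ⟨F, G, f, g, h, hT, ⟨hF, hFle, hFge⟩, hG, hGle, hGge⟩ :=
      exists_triangle_purified (n := 0) b t hbeta htau hX.1 hX.2
    refine ⟨F, G, f, g, h, hT, ?_, ?_⟩
    · rw [hLp]
      exact ⟨⟨hF, hFle⟩, hFle, hFge⟩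
    · rw [hGp]
      exact ⟨⟨hG, hGge⟩, hGle, hGge⟩

/-- Let `D` carry a baric structure and a t-structure such that the baric
truncations `β_{≥w}` are left t-exact and the t-truncations `τ_{≥n}` are right baryexact.
With `D^{[≤n]}_{≤w} = (D^{≤n} * D_{≤w-1}) ∩ D_{≤w}` and `D^{[≥n]}_{≥w} = D^{≥n} ∩ D_{≥w}`,
and `P_w = D_{≤w} ∩ D_{≥w}` the category of pure objects of baric degree `w`, the pair
`(D^{[≤0]}_{≤w} ∩ P_w, D^{[≥0]}_{≥w} ∩ P_w)` is a t-structure on `P_w` (nesting,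
Hom-vanishing, and existence of truncation triangles inside `P_w`). -/
theorem purified_standard_tStructure
    (b : BaricStructure D) (t : TStructure D) (w : ℤ)
    -- `β_{≥ w'}` is left t-exact, for every `w'` (triangle formulation): in any baric
    -- truncation triangle of an object of `D^{≥ n}`, the third term is again in `D^{≥ n}`
    (hbeta : ∀ (w' n : ℤ) (T : Triangle D), T ∈ (distTriang D) → T.obj₁ ∈ b.le w' →
      T.obj₃ ∈ b.ge (w' + 1) → t.ge n T.obj₂ → t.ge n T.obj₃)
    -- `τ_{≥ n}` is right baryexact: in any t-truncation triangle of an object of `D_{≤ w'}`,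
    -- the third term is again in `D_{≤ w'}`
    (htau : ∀ (w' n : ℤ) (T : Triangle D), T ∈ (distTriang D) → t.le (n - 1) T.obj₁ →
      t.ge n T.obj₃ → T.obj₂ ∈ b.le w' → T.obj₃ ∈ b.le w')
    -- notation: the two halves of the purified standard t-structure on `P_w`
    (P Lp Gp : ℤ → Set D)
    (hP : ∀ _n : ℤ, P _n = b.le w ∩ b.ge w)
    (hLp : ∀ n : ℤ, Lp n =
      (starOp ({X | t.le n X}) (b.le (w - 1)) ∩ b.le w) ∩ (b.le w ∩ b.ge w))
    (hGp : ∀ n : ℤ, Gp n = ({X | t.ge n X} ∩ b.ge w) ∩ (b.le w ∩ b.ge w)) :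
    -- (i) nesting
    (∀ n : ℤ, Lp n ⊆ Lp (n + 1)) ∧ (∀ n : ℤ, Gp (n + 1) ⊆ Gp n) ∧
    -- (ii) Hom-vanishing
    (∀ A ∈ Lp 0, ∀ B ∈ Gp 1, ∀ f : A ⟶ B, f = 0) ∧
    -- (iii) truncation triangles, within the pure category `P_w`
    (∀ X ∈ b.le w ∩ b.ge w, ∃ (A B : D) (f : A ⟶ X) (g : X ⟶ B) (h : B ⟶ A⟦(1 : ℤ)⟧),
      (Triangle.mk f g h ∈ distTriang D) ∧ A ∈ Lp 0 ∧ B ∈ Gp 1) :=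
  purified_standard_tStructure_general b t w hbeta htau Lp Gp hLp hGp
end

section
/- With notation as in the construction of the purified t-structure: if F ∈ D_{≤w} (bounded-above version) and Hom(F, G) = 0 for all G ∈ D^{≥n+1} ∩ D_{≤w} ∩ D_{≥w}, then F ∈ (D^{≤n} * D_{≤w-1}) ∩ D_{≤w}. -/
open CategoryTheory Limits Pretriangulated Triangulated

universe v u

variable {D : Type u} [Category.{v} D] [HasZeroObject D] [Preadditive D] [HasShift D ℤ]
  [∀ n : ℤ, (shiftFunctor D n).Additive] [Pretriangulated D] [HasBinaryBiproducts D]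

/-!
Let `A → F → B →` be the t-truncation triangle, `A ∈ D^{≤n}`, `B ∈ D^{≥n+1}`. For a baric
truncation triangle `P → B → Q →` at level `v`, left t-exactness puts `Q` in `D^{≥n+1}`, so a
map `B → Q` vanishing on `F` factors through `A⟦1⟧ ∈ D^{≤n-1}` and is zero; hence `B ∈ D_{≤v}`.
For `v = w` the composite `F → Q` vanishes since `F ∈ D_{≤w}` and `Q ∈ D_{≥w+1}`. For
`v = w - 1` we then have `Q ∈ D^{≥n+1} ∩ D_{≤w} ∩ D_{≥w}`, and the hypothesis kills `F → Q`.
-/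

namespace BaricStructure

variable (b : BaricStructure D)

lemma le_ext₃ (w : ℤ) (T : Triangle D) (hT : T ∈ distTriang D)
    (h₁ : T.obj₁ ∈ b.le w) (h₂ : T.obj₂ ∈ b.le w) : T.obj₃ ∈ b.le w :=
  b.le_ext₂ w _ (rot_of_distTriang _ hT) h₂ (b.le_shift w 1 _ h₁)

lemma mem_le_of_mor₂_eq_zero_s14 {v : ℤ} {T : Triangle D} (hT : T ∈ distTriang D)
    (h₁ : T.obj₁ ∈ b.le v) (h₃ : T.obj₃ ∈ b.ge (v + 1)) (h : T.mor₂ = 0) :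
    T.obj₂ ∈ b.le v := by
  obtain ⟨r, hr⟩ := Triangle.yoneda_exact₃ T hT (𝟙 T.obj₃) (by rw [h, zero_comp])
  have h₃_zero : IsZero T.obj₃ := by
    rw [IsZero.iff_id_eq_zero, hr, b.hom_zero (b.le_shift v 1 _ h₁) h₃ r, comp_zero]
  have : IsIso T.mor₁ := (Triangle.isZero₃_iff_isIso₁ T hT).1 h₃_zero
  exact b.le_iso (asIso T.mor₁) h₁

end BaricStructure

omit [HasBinaryBiproducts D] in
lemma CategoryTheory.Triangulated.TStructure.eq_zero_of_mor₂_comp_eq_zero (t : TStructure D)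
    {T : Triangle D} (hT : T ∈ distTriang D) {n : ℤ} (h₁ : t.le n T.obj₁) {Q : D} (hQ : t.ge n Q)
    (φ : T.obj₃ ⟶ Q) (hφ : T.mor₂ ≫ φ = 0) : φ = 0 := by
  obtain ⟨ψ, rfl⟩ := Triangle.yoneda_exact₃ T hT φ hφ
  rw [t.zero_of_isLE_of_isGE ψ (n - 1) n (by omega)
    ⟨t.le_shift n 1 (n - 1) (by omega) _ h₁⟩ ⟨hQ⟩, comp_zero]

lemma mem_le_of_forall_comp_eq_zero (b : BaricStructure D) (t : TStructure D)
    (hbeta : ∀ (w' m : ℤ) (T : Triangle D), T ∈ (distTriang D) → T.obj₁ ∈ b.le w' →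
      T.obj₃ ∈ b.ge (w' + 1) → t.ge m T.obj₂ → t.ge m T.obj₃)
    {T : Triangle D} (hT : T ∈ distTriang D) {n : ℤ} (h₁ : t.le n T.obj₁)
    (h₃ : t.ge (n + 1) T.obj₃) (v : ℤ)
    (hcomp : ∀ (P Q : D) (f : P ⟶ T.obj₃) (g : T.obj₃ ⟶ Q) (h : Q ⟶ P⟦(1 : ℤ)⟧),
      Triangle.mk f g h ∈ distTriang D → P ∈ b.le v → Q ∈ b.ge (v + 1) →
        t.ge (n + 1) Q → T.mor₂ ≫ g = 0) :
    T.obj₃ ∈ b.le v := by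
  obtain ⟨P, Q, f, g, h, hT', hP, hQ⟩ := b.exists_triangle T.obj₃ v
  have hQt : t.ge (n + 1) Q := hbeta v (n + 1) _ hT' hP hQ h₃
  refine b.mem_le_of_mor₂_eq_zero_s14 hT' hP hQ ?_
  exact t.eq_zero_of_mor₂_comp_eq_zero hT h₁ (t.ge_antitone (by omega) _ hQt) g
    (hcomp P Q f g h hT' hP hQ hQt)

/-- converse half of Lemma 3.2: Suppose `D` carries a baric structure and a
t-structure with `β_{≥w}` left t-exact.  If `F ∈ D_{≤w}` and `Hom(F, G) = 0` for all
`G ∈ D^{≥n+1} ∩ D_{≤w} ∩ D_{≥w}`, then `F ∈ (D^{≤n} * D_{≤w-1}) ∩ D_{≤w}`. -/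
theorem mem_purified_aisle_of_hom_vanishing
    (b : BaricStructure D) (t : TStructure D) (w n : ℤ)
    -- `β_{≥ w'}` is left t-exact (triangle formulation)
    (hbeta : ∀ (w' m : ℤ) (T : Triangle D), T ∈ (distTriang D) → T.obj₁ ∈ b.le w' →
      T.obj₃ ∈ b.ge (w' + 1) → t.ge m T.obj₂ → t.ge m T.obj₃)
    (F : D) (hF : F ∈ b.le w)
    (hvanish : ∀ G : D, t.ge (n + 1) G → G ∈ b.le w → G ∈ b.ge w →
      ∀ f : F ⟶ G, f = 0) :
    F ∈ starOp ({X | t.le n X}) (b.le (w - 1)) ∩ b.le w := by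
  obtain ⟨A, B, hA, hB, f, g, h, hT⟩ := t.exists_triangle F n (n + 1) rfl
  have hBw : B ∈ b.le w :=
    mem_le_of_forall_comp_eq_zero b t hbeta hT hA hB w fun _ Q _ _ _ _ _ hQ _ ↦
      b.hom_zero hF hQ _
  have hBw' : B ∈ b.le (w - 1) :=
    mem_le_of_forall_comp_eq_zero b t hbeta hT hA hB (w - 1) fun P Q _ _ _ hT' hP hQ hQt ↦ by
      rw [sub_add_cancel] at hQ
      have hPw : P ∈ b.le w := by simpa using b.le_mono (w - 1) hP
      exact hvanish Q hQt (b.le_ext₃ w _ hT' hPw hBw) hQ _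
  exact ⟨⟨A, B, f, g, h, hT, hA, hBw'⟩, hF⟩
end
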